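/- Injectivity of spherical convolution with a kernel of positive spectral density: if h : S² → ℝ is continuous and its convolution with a kernel k satisfies (h ∗ k)(s) = 0 for all s ∈ S², where all spherical harmonic coefficients k̃(l,0) of k are strictly positive, then h = 0. -/

import Mathlib

abbrev Sphere2 := Metric.sphere (0 : EuclideanSpace ℝ (Fin 3)) 1

open Real in
lemma driscollHealy_factor_pos (l : ℕ) : 0 < 2 * π * √(4 * π / (2 * l + 1)) := by
  have hsqrt : 0 < √(4 * π / (2 * l + 1)) := Real.sqrt_pos.2 (by positivity)
  positivity

/-- Injectivity of spherical convolution with a kernel of positive spectral density.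
Here `coeff u l m` denotes the spherical harmonic coefficient `ũ(l,m)` of a function
`u : S² → ℝ` (with degree `l : ℕ` and order `m : ℤ`, `|m| ≤ l`). The Driscoll–Healy
convolution theorem gives `(h∗k)~(l,m) = α(l)·h̃(l,m)·k̃(l,0)` with
`α(l) = 2π√(4π/(2l+1)) > 0`, and a continuous function on `S²` whose spherical harmonic
coefficients all vanish is identically zero. If `k` has positive spectral density
(`k̃(l,0) > 0` for all `l`) and `(h ∗ k)(s) = 0` for all `s`, then `h = 0`. -/
theorem spherical_convolution_injective
    (coeff : (Sphere2 → ℝ) → ℕ → ℤ → ℝ)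
    (hcoeff_zero : ∀ u : Sphere2 → ℝ, Continuous u →
      (∀ (l : ℕ) (m : ℤ), |m| ≤ l → coeff u l m = 0) → ∀ s, u s = 0)
    (h k conv : Sphere2 → ℝ)
    (hh_cont : Continuous h)
    (hconv_thm : ∀ (l : ℕ) (m : ℤ), |m| ≤ l →
      coeff conv l m =
        (2 * Real.pi * Real.sqrt (4 * Real.pi / (2 * l + 1))) * coeff h l m * coeff k l 0)
    (hk_pos : ∀ l : ℕ, 0 < coeff k l 0)
    (hconv_zero : ∀ s : Sphere2, conv s = 0)
    (hcoeff_of_zero : ∀ u : Sphere2 → ℝ, (∀ s, u s = 0) →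
      ∀ (l : ℕ) (m : ℤ), coeff u l m = 0) :
    ∀ s : Sphere2, h s = 0 := by
  refine hcoeff_zero h hh_cont fun l m hm => ?_
  have hprod := (hconv_thm l m hm).symm.trans (hcoeff_of_zero conv hconv_zero l m)
  have hfactor := (mul_eq_zero.1 hprod).resolve_right (hk_pos l).ne'
  exact (mul_eq_zero.1 hfactor).resolve_left (driscollHealy_factor_pos l).ne'
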